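/- arXiv:1312.0914 — 2 statements merged into one kernel-verified Lean document; each statement's English description precedes it below -/
import Mathlib

section
/- There exists an (N, K_d, K) = (256, 8, 4) exact-repair regenerating code for (n,k,d)=(4,3,3); consequently the normalized pair (ᾱ, β̄) = (3/8, 1/4) is (4,3,3) exact-repair achievable. -/
/-- An `(N, K_d, K)` exact-repair regenerating code for `(n,k,d) = (4,3,3)`. -/
structure ExactRepairCode433 (N Kd K : ℕ) where
  f : Fin 4 → Fin N → Fin Kd
  F : Fin 4 → Fin 4 → Fin Kd → Fin K
  G : (j : Fin 4) → ({i : Fin 4 // i ≠ j} → Fin K) → Fin Kd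
  reconstruct : ∀ A : Finset (Fin 4), A.card = 3 →
    Function.Injective fun m : Fin N => fun i : A => f i m
  repair : ∀ (j : Fin 4) (m : Fin N),
    G j (fun i => F i.1 j (f i.1 m)) = f j m

/-- A normalized pair `(ᾱ, β̄)` is `(4,3,3)` exact-repair achievable. -/
def Achievable433 (α β : ℝ) : Prop :=
  ∀ ε : ℝ, 0 < ε → ∃ (N Kd K : ℕ), 2 ≤ N ∧ Nonempty (ExactRepairCode433 N Kd K) ∧
    α + ε ≥ Real.log Kd / Real.log N ∧ β + ε ≥ Real.log K / Real.log N

set_option maxRecDepth 10000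
set_option maxHeartbeats 4000000

namespace S9

/-- Thue-Morse constant: bit `x` is the parity of the popcount of `x`, for `x < 512`. -/
def tmc : ℕ := 7877703466965951741784356862959128443265788382021580589009765834561689170293574700951863729220303088751879007905492507289381878411509378061636115163081110

/-- parity of the bits of `x` (valid for `x < 512`) -/
def par (x : ℕ) : Bool := (tmc >>> x) % 2 == 1

/-- pack three parity bits (w.r.t. masks `r0 r1 r2` applied to word `w`) into `Fin 8` -/
def pk3 (r0 r1 r2 w : ℕ) : Fin 8 :=
  ⟨((par (r0 &&& w)).toNat + 2 * (par (r1 &&& w)).toNat + 4 * (par (r2 &&& w)).toNat) % 8,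
    by omega⟩

def pk2 (r0 r1 w : ℕ) : Fin 4 :=
  ⟨((par (r0 &&& w)).toNat + 2 * (par (r1 &&& w)).toNat) % 4, by omega⟩

/-- encoding functions: node `i` stores three parities of the 8-bit message -/
def fA : Fin 4 → Fin 256 → Fin 8 :=
  ![fun m => pk3 98 222 254 m.val,
    fun m => pk3 202 38 213 m.val,
    fun m => pk3 33 88 30 m.val,
    fun m => pk3 158 151 201 m.val]

/-- repair-encoding combination masks (3-bit masks over the stored symbol's bits) -/
def c1 : Fin 4 → Fin 4 → ℕ := ![![0,1,2,2], ![1,0,2,3], ![1,2,0,3], ![2,2,1,0]]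
def c2 : Fin 4 → Fin 4 → ℕ := ![![0,6,4,5], ![4,0,5,4], ![4,5,0,4], ![5,4,6,0]]

def FF : Fin 4 → Fin 4 → Fin 8 → Fin 4 := fun i j x => pk2 (c1 i j) (c2 i j) x.val

/-- pack the three received `Fin 4` values (helpers in increasing order) into a 6-bit word -/
def wd (a b c : Fin 4) : ℕ := a.val + 4 * b.val + 16 * c.val

def GG : (j : Fin 4) → ({i : Fin 4 // i ≠ j} → Fin 4) → Fin 8 := fun j g =>
  if h0 : j = 0 then
    pk3 29 56 55 (wd (g ⟨1, by rw [h0]; decide⟩) (g ⟨2, by rw [h0]; decide⟩)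
      (g ⟨3, by rw [h0]; decide⟩))
  else if h1 : j = 1 then
    pk3 25 54 19 (wd (g ⟨0, by rw [h1]; decide⟩) (g ⟨2, by rw [h1]; decide⟩)
      (g ⟨3, by rw [h1]; decide⟩))
  else if h2 : j = 2 then
    pk3 58 39 49 (wd (g ⟨0, by rw [h2]; decide⟩) (g ⟨1, by rw [h2]; decide⟩)
      (g ⟨3, by rw [h2]; decide⟩))
  else if h3 : j = 3 then
    pk3 29 11 55 (wd (g ⟨0, by rw [h3]; decide⟩) (g ⟨1, by rw [h3]; decide⟩)
      (g ⟨2, by rw [h3]; decide⟩))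
  else ⟨0, by omega⟩

/-- pack three stored symbols (nodes in increasing order) into a 9-bit word -/
def w9 (a b c : Fin 8) : ℕ := a.val + 8 * b.val + 64 * c.val

/-- decode the 8-bit message from a 9-bit word via 8 parity masks -/
def dec8 (m0 m1 m2 m3 m4 m5 m6 m7 w : ℕ) : Fin 256 :=
  ⟨((par (m0 &&& w)).toNat + 2 * (par (m1 &&& w)).toNat + 4 * (par (m2 &&& w)).toNat
    + 8 * (par (m3 &&& w)).toNat + 16 * (par (m4 &&& w)).toNat + 32 * (par (m5 &&& w)).toNat
    + 64 * (par (m6 &&& w)).toNat + 128 * (par (m7 &&& w)).toNat) % 256, by omega⟩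

def dec012 (g : ({0,1,2} : Finset (Fin 4)) → Fin 8) : Fin 256 :=
  dec8 70 255 233 155 227 6 248 148
    (w9 (g ⟨0, by decide⟩) (g ⟨1, by decide⟩) (g ⟨2, by decide⟩))

def dec013 (g : ({0,1,3} : Finset (Fin 4)) → Fin 8) : Fin 256 :=
  dec8 333 69 83 298 89 6 66 293
    (w9 (g ⟨0, by decide⟩) (g ⟨1, by decide⟩) (g ⟨3, by decide⟩))

def dec023 (g : ({0,2,3} : Finset (Fin 4)) → Fin 8) : Fin 256 :=
  dec8 14 69 55 206 156 6 66 96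
    (w9 (g ⟨0, by decide⟩) (g ⟨2, by decide⟩) (g ⟨3, by decide⟩))

def dec123 (g : ({1,2,3} : Finset (Fin 4)) → Fin 8) : Fin 256 :=
  dec8 37 155 180 229 234 45 31 96
    (w9 (g ⟨1, by decide⟩) (g ⟨2, by decide⟩) (g ⟨3, by decide⟩))

theorem li012 : ∀ m : Fin 256, dec012 (fun i => fA i m) = m := by decide

theorem li013 : ∀ m : Fin 256, dec013 (fun i => fA i m) = m := by decide

theorem li023 : ∀ m : Fin 256, dec023 (fun i => fA i m) = m := by decide

theorem li123 : ∀ m : Fin 256, dec123 (fun i => fA i m) = m := by decide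

theorem repair_ok : ∀ (j : Fin 4) (m : Fin 256),
    GG j (fun i => FF i.1 j (fA i.1 m)) = fA j m := by decide

def code : ExactRepairCode433 256 8 4 where
  f := fA
  F := FF
  G := GG
  reconstruct := by
    have hc : ∀ B : Finset (Fin 4), B.card = 3 →
        B = {0,1,2} ∨ B = {0,1,3} ∨ B = {0,2,3} ∨ B = {1,2,3} := by decide
    intro A hA
    rcases hc A hA with h | h | h | h <;> subst h
    · exact Function.LeftInverse.injective (g := dec012) li012
    · exact Function.LeftInverse.injective (g := dec013) li013
    · exact Function.LeftInverse.injective (g := dec023) li023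
    · exact Function.LeftInverse.injective (g := dec123) li123
  repair := repair_ok

end S9

/-- There exists an `(N, K_d, K) = (256, 8, 4)` exact-repair regenerating code
for `(4,3,3)`; consequently the normalized pair `(ᾱ, β̄) = (3/8, 1/4)` is
`(4,3,3)` exact-repair achievable. -/
theorem statement9 :
    Nonempty (ExactRepairCode433 256 8 4) ∧
      Achievable433 (3 / 8 : ℝ) (1 / 4 : ℝ) := by
  have hL : (0:ℝ) < Real.log 2 := Real.log_pos (by norm_num)
  have h256 : Real.log ((256:ℕ):ℝ) = 8 * Real.log 2 := by
    rw [show ((256:ℕ):ℝ) = 2 ^ 8 by norm_num, Real.log_pow]; norm_num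
  have h8 : Real.log ((8:ℕ):ℝ) = 3 * Real.log 2 := by
    rw [show ((8:ℕ):ℝ) = 2 ^ 3 by norm_num, Real.log_pow]; norm_num
  have h4 : Real.log ((4:ℕ):ℝ) = 2 * Real.log 2 := by
    rw [show ((4:ℕ):ℝ) = 2 ^ 2 by norm_num, Real.log_pow]; norm_num
  refine ⟨⟨S9.code⟩, fun ε hε => ⟨256, 8, 4, by norm_num, ⟨S9.code⟩, ?_, ?_⟩⟩
  · rw [h8, h256]
    rw [show 3 * Real.log 2 / (8 * Real.log 2) = 3 / 8 by
      field_simp]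
    linarith
  · rw [h4, h256]
    rw [show 2 * Real.log 2 / (8 * Real.log 2) = 1 / 4 by
      field_simp; ring]
    linarith
end

section
/- There exists an (N, K_d, K) = (64, 8, 2) exact-repair regenerating code for (n,k,d)=(4,3,3) (achieving the MBR point (ᾱ, β̄) = (1/2, 1/6)); for example, the replication (repair-by-transfer) code in which the message consists of six bits indexed by the 2-element subsets {i,j} ⊆ Fin 4, node i stores the three bits indexed by subsets containing i, and node i repairs node j by transferring the shared bit indexed by {i,j}. -/
/-- edge index of {i,j} among the 6 pairs -/
def eIdx (i j : Fin 4) : ℕ :=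
  let a := min i.val j.val; let b := max i.val j.val
  if a = 0 then b - 1 else if a = 1 then b + 1 else 5

/-- position of neighbor j's bit in node i's storage -/
def pIdx (i j : Fin 4) : ℕ := if j.val < i.val then j.val else j.val - 1

set_option maxRecDepth 100000 in
set_option maxHeartbeats 4000000 in
def myCode : ExactRepairCode433 64 8 2 where
  f i m := ⟨(Finset.univ.sum fun j : Fin 4 =>
      if j = i then 0 else (m.val >>> eIdx i j) % 2 * 2 ^ pIdx i j) % 8,
    Nat.mod_lt _ (by norm_num)⟩
  F i j v := ⟨(v.val >>> pIdx i j) % 2, Nat.mod_lt _ (by norm_num)⟩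
  G j g := ⟨(Finset.univ.sum fun i : {i : Fin 4 // i ≠ j} =>
      (g i).val * 2 ^ pIdx j i.1) % 8, Nat.mod_lt _ (by norm_num)⟩
  reconstruct := by decide
  repair := by decide

/-- There exists an `(N, K_d, K) = (64, 8, 2)` exact-repair regenerating code
for `(4,3,3)` (e.g. the repair-by-transfer replication code with one message
bit per 2-element subset `{i,j} ⊆ Fin 4`, node `i` storing the three bits whose
index contains `i`); it achieves the MBR point `(ᾱ, β̄) = (1/2, 1/6)`. -/
theorem statement13 :
    Nonempty (ExactRepairCode433 64 8 2) ∧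
      Achievable433 (1 / 2 : ℝ) (1 / 6 : ℝ) := by
  refine ⟨⟨myCode⟩, fun ε hε => ⟨64, 8, 2, by norm_num, ⟨myCode⟩, ?_, ?_⟩⟩
  · have h64 : Real.log 64 = 6 * Real.log 2 := by
      rw [show (64 : ℝ) = 2 ^ 6 by norm_num, Real.log_pow]; push_cast; ring
    have h8 : Real.log 8 = 3 * Real.log 2 := by
      rw [show (8 : ℝ) = 2 ^ 3 by norm_num, Real.log_pow]; push_cast; ring
    have h2 : Real.log 2 ≠ 0 := by positivity
    have : Real.log (8 : ℕ) / Real.log (64 : ℕ) = 1 / 2 := by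
      push_cast; rw [h64, h8]; field_simp; ring
    rw [this]; linarith
  · have h64 : Real.log 64 = 6 * Real.log 2 := by
      rw [show (64 : ℝ) = 2 ^ 6 by norm_num, Real.log_pow]; push_cast; ring
    have h2 : Real.log 2 ≠ 0 := by positivity
    have : Real.log (2 : ℕ) / Real.log (64 : ℕ) = 1 / 6 := by
      push_cast; rw [h64]; field_simp
    rw [this]; linarith
end
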